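/- arXiv:1411.2538 — 2 statements merged into one kernel-verified Lean document; each statement's English description precedes it below -/
import Mathlib

section
/- Let p ∈ (0,1] and set p̃ = (p,...,p) ∈ [0,1]^n. For every pair of unconditional convex bodies A, B in ℝ^n and λ ∈ [0,1], the coordinatewise L^p combination is contained in the Firey combination: (1-λ)·A +_{p̃} λ·B ⊂ (1-λ)·A ⊕_p λ·B. -/
open Real Set

noncomputable def rmean (s l a b : ℝ) : ℝ :=
  if s = 0 then a ^ (1 - l) * b ^ l
  else ((1 - l) * a ^ s + l * b ^ s) ^ (1 / s)

def IsUncondSet {n : ℕ} (A : Set (Fin n → ℝ)) : Prop :=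
  ∀ x ∈ A, ∀ ε : Fin n → ℝ, (∀ i, ε i = 1 ∨ ε i = -1) → (fun i => ε i * x i) ∈ A

/-- The coordinatewise `L^p`-Minkowski combination (scalar exponent `p`). -/
noncomputable def pComb {n : ℕ} (p l : ℝ) (A B : Set (Fin n → ℝ)) : Set (Fin n → ℝ) :=
  {x | ∃ a ∈ A ∩ {y | ∀ i, 0 ≤ y i}, ∃ b ∈ B ∩ {y | ∀ i, 0 ≤ y i},
    ∀ i, |x i| = rmean p l (a i) (b i)}

/-- The support function of `A`. -/
noncomputable def suppFn {n : ℕ} (A : Set (Fin n → ℝ)) (u : Fin n → ℝ) : ℝ :=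
  sSup ((fun x => ∑ i, x i * u i) '' A)

/-- The Firey `L^p`-combination of convex bodies. -/
noncomputable def fireyComb {n : ℕ} (p l : ℝ) (A B : Set (Fin n → ℝ)) : Set (Fin n → ℝ) :=
  {x | ∀ u : Fin n → ℝ, ∑ i, (u i) ^ 2 = 1 →
    ∑ i, x i * u i ≤ ((1 - l) * (suppFn A u) ^ p + l * (suppFn B u) ^ p) ^ (1 / p)}


lemma sum_mul_abs_le_suppFn {n : ℕ} {A : Set (Fin n → ℝ)} (hAu : IsUncondSet A)
    (hAk : IsCompact A) {a : Fin n → ℝ} (ha : a ∈ A) (haP : ∀ i, 0 ≤ a i)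
    (u : Fin n → ℝ) : ∑ i, a i * |u i| ≤ suppFn A u := by
  have hbdd : BddAbove ((fun x : Fin n → ℝ => ∑ i, x i * u i) '' A) :=
    (hAk.image (by continuity)).bddAbove
  set ε : Fin n → ℝ := fun i => if 0 ≤ u i then 1 else -1 with hε
  have hmem : (fun i => ε i * a i) ∈ A :=
    hAu a ha ε (fun i => by by_cases h : 0 ≤ u i <;> simp [ε, h])
  have hsum : ∑ i, (ε i * a i) * u i = ∑ i, a i * |u i| := by
    refine Finset.sum_congr rfl fun i _ => ?_
    by_cases h : 0 ≤ u i
    · simp only [ε, if_pos h, abs_of_nonneg h]; ring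
    · simp only [ε, if_neg h, abs_of_neg (lt_of_not_ge h)]; ring
  calc ∑ i, a i * |u i| = ∑ i, (ε i * a i) * u i := hsum.symm
    _ ≤ suppFn A u := le_csSup hbdd ⟨_, hmem, rfl⟩

theorem pComb_subset_fireyComb {n : ℕ} (p : ℝ) (hp : p ∈ Set.Ioc (0 : ℝ) 1)
    (A B : Set (Fin n → ℝ))
    (hAu : IsUncondSet A) (hBu : IsUncondSet B)
    (hAc : Convex ℝ A) (hBc : Convex ℝ B)
    (hAk : IsCompact A) (hBk : IsCompact B)
    (hAi : (0 : Fin n → ℝ) ∈ interior A) (hBi : (0 : Fin n → ℝ) ∈ interior B)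
    (l : ℝ) (hl : l ∈ Set.Icc (0 : ℝ) 1) :
    pComb p l A B ⊆ fireyComb p l A B := by
  obtain ⟨hp0, hp1⟩ := hp
  obtain ⟨hl0, hl1⟩ := hl
  have hl1' : (0:ℝ) ≤ 1 - l := by linarith
  have hq : 1 ≤ 1 / p := by rw [le_div_iff₀ hp0]; linarith
  intro x hx u _
  obtain ⟨a, ⟨haA, haP⟩, b, ⟨hbB, hbP⟩, hxab⟩ := hx
  set S : Fin n → ℝ := fun i => a i * |u i| with hS
  set T : Fin n → ℝ := fun i => b i * |u i| with hT
  have hSP : ∀ i, 0 ≤ S i := fun i => mul_nonneg (haP i) (abs_nonneg _)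
  have hTP : ∀ i, 0 ≤ T i := fun i => mul_nonneg (hbP i) (abs_nonneg _)
  have hSsum : (0:ℝ) ≤ ∑ i, S i := Finset.sum_nonneg fun i _ => hSP i
  have hTsum : (0:ℝ) ≤ ∑ i, T i := Finset.sum_nonneg fun i _ => hTP i
  have hSA : ∑ i, S i ≤ suppFn A u := sum_mul_abs_le_suppFn hAu hAk haA haP u
  have hTB : ∑ i, T i ≤ suppFn B u := sum_mul_abs_le_suppFn hBu hBk hbB hbP u
  -- Step 1: bound by the sum of per-coordinate p-means times |u i|
  have step1 : ∑ i, x i * u i ≤ ∑ i, ((1-l) * (S i) ^ p + l * (T i) ^ p) ^ (1/p) := by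
    apply Finset.sum_le_sum
    intro i _
    calc x i * u i ≤ |x i * u i| := le_abs_self _
      _ = |x i| * |u i| := abs_mul _ _
      _ = ((1-l) * (S i) ^ p + l * (T i) ^ p) ^ (1/p) := by
          rw [hxab i, rmean, if_neg hp0.ne']
          have h1 : (S i) ^ p = (a i) ^ p * |u i| ^ p :=
            Real.mul_rpow (haP i) (abs_nonneg _)
          have h2 : (T i) ^ p = (b i) ^ p * |u i| ^ p :=
            Real.mul_rpow (hbP i) (abs_nonneg _)
          rw [h1, h2]
          have hbase : (0:ℝ) ≤ (1-l) * (a i) ^ p + l * (b i) ^ p :=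
            add_nonneg (mul_nonneg hl1' (Real.rpow_nonneg (haP i) p))
              (mul_nonneg hl0 (Real.rpow_nonneg (hbP i) p))
          have : (1-l) * ((a i) ^ p * |u i| ^ p) + l * ((b i) ^ p * |u i| ^ p)
              = ((1-l) * (a i) ^ p + l * (b i) ^ p) * |u i| ^ p := by ring
          rw [this, Real.mul_rpow hbase (Real.rpow_nonneg (abs_nonneg _) p),
            ← Real.rpow_mul (abs_nonneg _), mul_one_div_cancel hp0.ne', Real.rpow_one]
  -- Step 2: Minkowski (reverse direction, via exponent 1/p ≥ 1)
  have step2 : ∑ i, ((1-l) * (S i) ^ p + l * (T i) ^ p) ^ (1/p)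
      ≤ ((1-l) * (∑ i, S i) ^ p + l * (∑ i, T i) ^ p) ^ (1/p) := by
    set q := 1/p with hqdef
    have hq0 : (0:ℝ) < q := by positivity
    have hpq : p * q = 1 := mul_one_div_cancel hp0.ne'
    have hqp : q * p = 1 := by rw [mul_comm]; exact hpq
    have h1q : 1/q = p := by rw [hqdef, one_div_one_div]
    have hFP : ∀ i, (0:ℝ) ≤ (1-l) * (S i) ^ p :=
      fun i => mul_nonneg hl1' (Real.rpow_nonneg (hSP i) p)
    have hGP : ∀ i, (0:ℝ) ≤ l * (T i) ^ p :=
      fun i => mul_nonneg hl0 (Real.rpow_nonneg (hTP i) p)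
    have hmink := Real.Lp_add_le_of_nonneg (s := Finset.univ)
      (f := fun i => (1-l) * (S i) ^ p) (g := fun i => l * (T i) ^ p) hq
      (fun i _ => hFP i) (fun i _ => hGP i)
    beta_reduce at hmink
    rw [h1q] at hmink
    have eF : ∑ i, ((1-l) * (S i) ^ p) ^ q = (1-l) ^ q * ∑ i, S i := by
      rw [Finset.mul_sum]
      refine Finset.sum_congr rfl fun i _ => ?_
      rw [Real.mul_rpow hl1' (Real.rpow_nonneg (hSP i) p), ← Real.rpow_mul (hSP i), hpq,
        Real.rpow_one]
    have eG : ∑ i, (l * (T i) ^ p) ^ q = l ^ q * ∑ i, T i := by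
      rw [Finset.mul_sum]
      refine Finset.sum_congr rfl fun i _ => ?_
      rw [Real.mul_rpow hl0 (Real.rpow_nonneg (hTP i) p), ← Real.rpow_mul (hTP i), hpq,
        Real.rpow_one]
    rw [eF, eG, Real.mul_rpow (Real.rpow_nonneg hl1' q) hSsum,
      Real.mul_rpow (Real.rpow_nonneg hl0 q) hTsum,
      ← Real.rpow_mul hl1', ← Real.rpow_mul hl0, hqp, Real.rpow_one,
      Real.rpow_one] at hmink
    have hsumnn : (0:ℝ) ≤ ∑ i, ((1-l) * (S i) ^ p + l * (T i) ^ p) ^ q :=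
      Finset.sum_nonneg fun i _ => Real.rpow_nonneg (add_nonneg (hFP i) (hGP i)) q
    calc ∑ i, ((1-l) * (S i) ^ p + l * (T i) ^ p) ^ q
        = ((∑ i, ((1-l) * (S i) ^ p + l * (T i) ^ p) ^ q) ^ p) ^ q := by
          rw [← Real.rpow_mul hsumnn, hpq, Real.rpow_one]
      _ ≤ ((1-l) * (∑ i, S i) ^ p + l * (∑ i, T i) ^ p) ^ q :=
          Real.rpow_le_rpow (Real.rpow_nonneg hsumnn p) hmink hq0.le
  calc ∑ i, x i * u i ≤ _ := step1
    _ ≤ ((1-l) * (∑ i, S i) ^ p + l * (∑ i, T i) ^ p) ^ (1/p) := step2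
    _ ≤ ((1-l) * (suppFn A u) ^ p + l * (suppFn B u) ^ p) ^ (1/p) := by
        apply Real.rpow_le_rpow
        · exact add_nonneg (mul_nonneg hl1' (Real.rpow_nonneg hSsum p))
            (mul_nonneg hl0 (Real.rpow_nonneg hTsum p))
        · exact add_le_add
            (mul_le_mul_of_nonneg_left (Real.rpow_le_rpow hSsum hSA hp0.le) hl1')
            (mul_le_mul_of_nonneg_left (Real.rpow_le_rpow hTsum hTB hp0.le) hl0)
        · positivity
end

section
/- The following are equivalent: (1) for every n ∈ ℕ*, every symmetric log-concave measure μ on ℝ^n and every symmetric convex set A ⊂ ℝ^n, the function t ↦ μ(e^t A) is log-concave on ℝ; (2) for every n ∈ ℕ* and all even log-concave functions f, g : ℝ^n → ℝ_+, the function t ↦ ∫_{ℝ^n} f(e^{-t}x)g(x)dx is log-concave on ℝ. -/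
open Real MeasureTheory Set Pointwise

/-- A measure satisfies the (B)-property if `t ↦ ν(eᵗA)` is log-concave on `ℝ`
for every symmetric convex set `A`. -/
noncomputable def BProperty {E : Type*} [NormedAddCommGroup E] [NormedSpace ℝ E]
    [MeasurableSpace E] (ν : Measure E) : Prop :=
  ∀ A : Set E, Convex ℝ A → (∀ x ∈ A, -x ∈ A) →
    ∀ s t : ℝ, ∀ l ∈ Set.Icc (0 : ℝ) 1,
      (ν (Real.exp s • A)).toReal ^ (1 - l) * (ν (Real.exp t • A)).toReal ^ l ≤
        (ν (Real.exp ((1 - l) * s + l * t) • A)).toReal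

/-- A nonnegative function is log-concave if it satisfies the multiplicative
concavity inequality; `Even` means invariance under `x ↦ -x`. -/
def IsEvenLogConcave {E : Type*} [AddCommGroup E] [Module ℝ E] (f : E → ℝ) : Prop :=
  (∀ x, 0 ≤ f x) ∧ (∀ x, f (-x) = f x) ∧
    ∀ x y : E, ∀ l ∈ Set.Icc (0 : ℝ) 1,
      f x ^ (1 - l) * f y ^ l ≤ f ((1 - l) • x + l • y)

/-!
(2) ⇒ (1): take `f = 1_A` and `g` the density of `μ`, since `∫ 1_A(e⁻ᵘx) g(x) dx = μ(eᵘA)`.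

(1) ⇒ (2): approximate `g = exp (log g)` from below by `g_q = (1 + log g / q)₊ ^ q`. As `log g` is
concave, `K_q = {(x, y) ∈ ℝⁿ × ℝ^q | ‖y‖∞ ≤ 1 + log g(x) / q}` is a symmetric convex set whose fibre
over `x` has volume `2^q g_q(x)`. For the even log-concave density `f(x)` on `ℝ^(n+q)` this gives
`ν(e⁻ᵘ K_q) = e^{-(n+q)u} 2^q ∫ f(e⁻ᵘx) g_q(x) dx`, so the (B)-property of `ν` makes
`u ↦ ∫ f(e⁻ᵘx) g_q(x) dx` log-concave, the factor `e^{-(n+q)u} 2^q` being log-affine. Dominated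
convergence as `q → ∞` passes this to `g`; integrability at `(1 - l)s + lt` follows from
integrability at `s` and `t` because `f(e⁻ᵘx)` is nondecreasing in `u`.
-/

open scoped ENNReal Topology
open Filter

namespace IsEvenLogConcave

section VectorSpace

variable {E : Type*} [AddCommGroup E] [Module ℝ E] {f : E → ℝ}

theorem quasiconcaveOn (hf : IsEvenLogConcave f) : QuasiconcaveOn ℝ univ f := by
  refine quasiconcaveOn_iff_min_le.2 ⟨convex_univ, fun x _ y _ a b ha hb hab => ?_⟩
  obtain rfl : a = 1 - b := by linarith
  have hmin : 0 ≤ min (f x) (f y) := le_min (hf.1 x) (hf.1 y)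
  calc min (f x) (f y) = min (f x) (f y) ^ (1 - b) * min (f x) (f y) ^ b := by
        rw [← rpow_add' hmin (by simp), sub_add_cancel, rpow_one]
    _ ≤ f x ^ (1 - b) * f y ^ b :=
        mul_le_mul (rpow_le_rpow hmin (min_le_left _ _) ha)
          (rpow_le_rpow hmin (min_le_right _ _) hb) (by positivity) (rpow_nonneg (hf.1 x) _)
    _ ≤ f ((1 - b) • x + b • y) := hf.2.2 x y b ⟨hb, by linarith⟩

theorem le_apply_smul (hf : IsEvenLogConcave f) {c : ℝ} (hc0 : 0 ≤ c) (hc1 : c ≤ 1) (x : E) :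
    f x ≤ f (c • x) := by
  have h := (quasiconcaveOn_iff_min_le.1 hf.quasiconcaveOn).2 (mem_univ (-x)) (mem_univ x)
    (show 0 ≤ (1 - c) / 2 by linarith) (show 0 ≤ (1 + c) / 2 by linarith) (by ring)
  rwa [hf.2.1, min_self, smul_neg, neg_add_eq_sub, ← sub_smul,
    show (1 + c) / 2 - (1 - c) / 2 = c by ring] at h

theorem concaveOn_log (hf : IsEvenLogConcave f) :
    ConcaveOn ℝ {x | 0 < f x} fun x => log (f x) := by
  refine ⟨by simpa using hf.quasiconcaveOn.convex_gt 0, fun x hx y hy a b ha hb hab => ?_⟩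
  obtain rfl : a = 1 - b := by linarith
  have hx : 0 < f x := hx
  have hy : 0 < f y := hy
  calc (1 - b) • log (f x) + b • log (f y) = log (f x ^ (1 - b) * f y ^ b) := by
        rw [log_mul (by positivity) (by positivity), log_rpow hx, log_rpow hy, smul_eq_mul,
          smul_eq_mul]
    _ ≤ log (f ((1 - b) • x + b • y)) :=
        log_le_log (by positivity) (hf.2.2 x y b ⟨hb, by linarith⟩)

theorem comp_linearMap (hf : IsEvenLogConcave f) {F : Type*} [AddCommGroup F] [Module ℝ F]
    (L : F →ₗ[ℝ] E) : IsEvenLogConcave fun z => f (L z) :=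
  ⟨fun z => hf.1 _, fun z => by simp only [map_neg, hf.2.1], fun z w l hl => by
    simpa only [map_add, map_smul] using hf.2.2 (L z) (L w) l hl⟩

theorem comp_smul (hf : IsEvenLogConcave f) (c : ℝ) : IsEvenLogConcave fun x => f (c • x) :=
  hf.comp_linearMap (c • LinearMap.id)

theorem monotone_exp_neg_smul (hf : IsEvenLogConcave f) (x : E) :
    Monotone fun u => f (exp (-u) • x) := fun u v huv => by
  have h := hf.le_apply_smul (exp_pos (u - v)).le (exp_le_one_iff.2 (by linarith)) (exp (-u) • x)
  rwa [smul_smul, ← exp_add, show u - v + -u = -v by ring] at h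

end VectorSpace

theorem aemeasurable {E : Type*} [NormedAddCommGroup E] [NormedSpace ℝ E] [MeasurableSpace E]
    [BorelSpace E] [FiniteDimensional ℝ E] {μ : Measure E} [μ.IsAddHaarMeasure] {f : E → ℝ}
    (hf : IsEvenLogConcave f) : AEMeasurable f μ := by
  refine NullMeasurable.aemeasurable (measurable_of_Ioi fun c => ?_)
  have hc : Convex ℝ {x | c < f x} := by simpa using hf.quasiconcaveOn.convex_gt c
  exact hc.nullMeasurableSet μ

end IsEvenLogConcave

theorem isEvenLogConcave_indicator {E : Type*} [AddCommGroup E] [Module ℝ E] {A : Set E}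
    (hA : Convex ℝ A) (hsym : ∀ x ∈ A, -x ∈ A) : IsEvenLogConcave (A.indicator 1) := by
  have hneg : ∀ x, -x ∈ A ↔ x ∈ A := fun x => ⟨fun h => by simpa using hsym _ h, hsym x⟩
  refine ⟨indicator_nonneg fun _ _ => zero_le_one, fun x => ?_, fun x y l ⟨hl0, hl1⟩ => ?_⟩
  · by_cases hx : x ∈ A <;> simp [hx, hneg]
  rcases hl0.eq_or_lt with rfl | hl0
  · simp
  rcases hl1.eq_or_lt with rfl | hl1
  · simp
  by_cases hxy : x ∈ A ∧ y ∈ A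
  · rw [indicator_of_mem hxy.1, indicator_of_mem hxy.2,
      indicator_of_mem (hA hxy.1 hxy.2 (by linarith) hl0.le (by ring))]
    simp
  · refine le_trans (le_of_eq ?_) (indicator_nonneg (fun _ _ => zero_le_one) _)
    rcases not_and_or.1 hxy with hx | hy
    · rw [indicator_of_notMem hx, zero_rpow (by linarith), zero_mul]
    · rw [indicator_of_notMem hy, zero_rpow hl0.ne', mul_zero]

def IsLogConcave (φ : ℝ → ℝ) : Prop :=
  ∀ s t : ℝ, ∀ l ∈ Icc (0 : ℝ) 1, φ s ^ (1 - l) * φ t ^ l ≤ φ ((1 - l) * s + l * t)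

namespace IsLogConcave

variable {φ : ℝ → ℝ}

theorem comp_neg (h : IsLogConcave φ) : IsLogConcave fun u => φ (-u) := fun s t l hl => by
  convert h (-s) (-t) l hl using 2
  ring

theorem of_exp_affine_mul (a b : ℝ) (hφ : ∀ u, 0 ≤ φ u)
    (h : IsLogConcave fun u => exp (a * u + b) * φ u) : IsLogConcave φ := by
  intro s t l hl
  have key := h s t l hl
  rw [mul_rpow (exp_pos _).le (hφ s), mul_rpow (exp_pos _).le (hφ t), ← exp_mul, ← exp_mul,
    mul_mul_mul_comm, ← exp_add,
    show (a * s + b) * (1 - l) + (a * t + b) * l = a * ((1 - l) * s + l * t) + b by ring] at key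
  exact le_of_mul_le_mul_left key (exp_pos _)

end IsLogConcave

theorem rpow_mul_rpow_le_of_tendsto {ι : Type*} {L : Filter ι} [L.NeBot] {A B C : ι → ℝ}
    {a b c l : ℝ} (hl : l ∈ Icc (0 : ℝ) 1) (hA : Tendsto A L (𝓝 a)) (hB : Tendsto B L (𝓝 b))
    (hC : ∀ᶠ i in L, C i ≤ c) (h : ∀ᶠ i in L, A i ^ (1 - l) * B i ^ l ≤ C i) :
    a ^ (1 - l) * b ^ l ≤ c :=
  le_of_tendsto ((hA.rpow_const (Or.inr (by linarith [hl.2]))).mul (hB.rpow_const (Or.inr hl.1)))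
    ((h.and hC).mono fun _ hi => hi.1.trans hi.2)

/-- The paper's `(1 - V / q)₊ ^ q` for `r = e⁻ⱽ`; the guard `0 < r` is needed because
`log 0 = 0`. -/
noncomputable def powApprox (q : ℕ) (r : ℝ) : ℝ :=
  if 0 < r then max (1 + log r / q) 0 ^ q else 0

theorem powApprox_nonneg (q : ℕ) (r : ℝ) : 0 ≤ powApprox q r := by
  unfold powApprox
  split_ifs <;> positivity

theorem powApprox_le {q : ℕ} (hq : q ≠ 0) {r : ℝ} (hr : 0 ≤ r) : powApprox q r ≤ r := by
  unfold powApprox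
  split_ifs with hr0
  · rcases le_total (1 + log r / q) 0 with h | h
    · rw [max_eq_right h, zero_pow hq]
      exact hr
    · have hlog : -log r ≤ q := by
        have := (le_div_iff₀ (by positivity : (0 : ℝ) < q)).1 (show -1 ≤ log r / q by linarith)
        linarith
      calc max (1 + log r / q) 0 ^ q = (1 - -log r / q) ^ q := by rw [max_eq_left h]; ring
        _ ≤ exp (- -log r) := one_sub_div_pow_le_exp_neg hlog
        _ = r := by rw [neg_neg, exp_log hr0]
  · exact hr

theorem tendsto_powApprox {r : ℝ} (hr : 0 ≤ r) :
    Tendsto (fun q : ℕ => powApprox q r) atTop (𝓝 r) := by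
  rcases hr.eq_or_lt with rfl | hr
  · simp [powApprox]
  have hpos : ∀ᶠ q : ℕ in atTop, 0 ≤ 1 + log r / q := by
    have h1 : Tendsto (fun q : ℕ => 1 + log r / q) atTop (𝓝 (1 + 0)) :=
      (tendsto_const_div_atTop_nhds_zero_nat (log r)).const_add 1
    exact h1.eventually_const_le (by norm_num)
  have hlim := tendsto_one_add_div_pow_exp (log r)
  rw [exp_log hr] at hlim
  refine hlim.congr' (hpos.mono fun q hq => ?_)
  simp [powApprox, hr, max_eq_left hq]

theorem measurable_powApprox (q : ℕ) : Measurable (powApprox q) :=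
  Measurable.ite measurableSet_Ioi
    (((measurable_const.add (measurable_log.div_const _)).max measurable_const).pow_const _)
    measurable_const

section Integral

variable {α : Type*} [MeasurableSpace α] {μ : Measure α} {φ g : α → ℝ}

theorem tendsto_integral_mul_powApprox (hφ0 : ∀ x, 0 ≤ φ x) (hφm : AEStronglyMeasurable φ μ)
    (hg0 : ∀ x, 0 ≤ g x) (hgm : AEMeasurable g μ) (hint : Integrable (fun x => φ x * g x) μ) :
    Tendsto (fun q : ℕ => ∫ x, φ x * powApprox q (g x) ∂μ) atTop (𝓝 (∫ x, φ x * g x ∂μ)) := by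
  refine tendsto_integral_filter_of_dominated_convergence _
    (Eventually.of_forall fun q =>
      hφm.mul ((measurable_powApprox q).comp_aemeasurable hgm).aestronglyMeasurable)
    ((eventually_ne_atTop 0).mono fun q hq => Eventually.of_forall fun x => ?_) hint
    (Eventually.of_forall fun x => (tendsto_powApprox (hg0 x)).const_mul (φ x))
  rw [norm_of_nonneg (mul_nonneg (hφ0 x) (powApprox_nonneg _ _))]
  exact mul_le_mul_of_nonneg_left (powApprox_le hq (hg0 x)) (hφ0 x)

theorem integral_mul_powApprox_le {q : ℕ} (hq : q ≠ 0) (hφ0 : ∀ x, 0 ≤ φ x)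
    (hg0 : ∀ x, 0 ≤ g x) (hint : Integrable (fun x => φ x * g x) μ) :
    ∫ x, φ x * powApprox q (g x) ∂μ ≤ ∫ x, φ x * g x ∂μ :=
  integral_mono_of_nonneg
    (Eventually.of_forall fun x => mul_nonneg (hφ0 x) (powApprox_nonneg _ _)) hint
    (Eventually.of_forall fun x => mul_le_mul_of_nonneg_left (powApprox_le hq (hg0 x)) (hφ0 x))

theorem isLogConcave_integral_mul_of_powApprox {F : ℝ → α → ℝ} (hF0 : ∀ u x, 0 ≤ F u x)
    (hFm : ∀ u, AEStronglyMeasurable (F u) μ) (hFmono : ∀ x, Monotone fun u => F u x)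
    (hg0 : ∀ x, 0 ≤ g x) (hgm : AEMeasurable g μ)
    (happrox : ∀ q : ℕ, q ≠ 0 → IsLogConcave fun u => ∫ x, F u x * powApprox q (g x) ∂μ) :
    IsLogConcave fun u => ∫ x, F u x * g x ∂μ := by
  intro s t l ⟨hl0, hl1⟩
  beta_reduce
  rcases hl0.eq_or_lt with rfl | hl0
  · simp
  rcases hl1.eq_or_lt with rfl | hl1
  · simp
  have hI0 : ∀ u, 0 ≤ ∫ x, F u x * g x ∂μ := fun u =>
    integral_nonneg fun x => mul_nonneg (hF0 u x) (hg0 x)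
  by_cases hs : Integrable (fun x => F s x * g x) μ
  swap
  · rw [integral_undef hs, zero_rpow (by linarith), zero_mul]
    exact hI0 _
  by_cases ht : Integrable (fun x => F t x * g x) μ
  swap
  · rw [integral_undef ht, zero_rpow hl0.ne', mul_zero]
    exact hI0 _
  set m := (1 - l) * s + l * t
  -- `u ↦ F u x` is monotone, so `F m ≤ F (max s t) ≤ F s + F t`.
  have hm : Integrable (fun x => F m x * g x) μ := by
    refine (hs.add ht).mono' ((hFm m).mul hgm.aestronglyMeasurable)
      (Eventually.of_forall fun x => ?_)
    have hmax : m ≤ max s t := Convex.combo_le_max s t (by linarith) hl0.le (by ring)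
    rw [norm_of_nonneg (mul_nonneg (hF0 m x) (hg0 x))]
    refine (mul_le_mul_of_nonneg_right (hFmono x hmax) (hg0 x)).trans ?_
    simp only [Pi.add_apply]
    rcases max_choice s t with h | h <;> rw [h] <;>
      linarith [mul_nonneg (hF0 s x) (hg0 x), mul_nonneg (hF0 t x) (hg0 x)]
  exact rpow_mul_rpow_le_of_tendsto ⟨hl0.le, hl1.le⟩
    (tendsto_integral_mul_powApprox (hF0 s) (hFm s) hg0 hgm hs)
    (tendsto_integral_mul_powApprox (hF0 t) (hFm t) hg0 hgm ht)
    ((eventually_ne_atTop 0).mono fun q hq => integral_mul_powApprox_le hq (hF0 m) hg0 hm)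
    ((eventually_ne_atTop 0).mono fun q hq => happrox q hq s t l ⟨hl0.le, hl1.le⟩)

end Integral

theorem ConcaveOn.convex_setOf_norm_le {E G : Type*} [AddCommGroup E] [Module ℝ E]
    [SeminormedAddCommGroup G] [NormedSpace ℝ G] {s : Set E} {r : E → ℝ}
    (hr : ConcaveOn ℝ s r) : Convex ℝ {p : E × G | p.1 ∈ s ∧ ‖p.2‖ ≤ r p.1} := by
  rintro ⟨x, y⟩ ⟨hx, hy⟩ ⟨x', y'⟩ ⟨hx', hy'⟩ a b ha hb hab
  refine ⟨hr.1 hx hx' ha hb hab, ?_⟩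
  calc ‖a • y + b • y'‖ ≤ a * ‖y‖ + b * ‖y'‖ := by
        refine (norm_add_le _ _).trans_eq ?_
        rw [norm_smul, norm_smul, norm_of_nonneg ha, norm_of_nonneg hb]
    _ ≤ a * r x + b * r x' := by gcongr
    _ ≤ r (a • x + b • x') := hr.2 hx hx' ha hb hab

theorem setLIntegral_prod_fst {α β : Type*} [MeasurableSpace α] [MeasurableSpace β]
    {μ : Measure α} {ν : Measure β} [SFinite ν] {T : Set (α × β)}
    (hT : NullMeasurableSet T (μ.prod ν)) (hTx : ∀ x, NullMeasurableSet (Prod.mk x ⁻¹' T) ν)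
    {ψ : α → ℝ≥0∞} (hψ : AEMeasurable ψ μ) :
    ∫⁻ p in T, ψ p.1 ∂μ.prod ν = ∫⁻ x, ψ x * ν (Prod.mk x ⁻¹' T) ∂μ := by
  rw [← lintegral_indicator₀ hT,
    lintegral_prod (T.indicator fun p => ψ p.1)
      ((hψ.comp_quasiMeasurePreserving Measure.quasiMeasurePreserving_fst).indicator₀ hT)]
  refine lintegral_congr fun x => ?_
  rw [← lintegral_indicator_const₀ (hTx x)]
  exact lintegral_congr fun y => by by_cases h : (x, y) ∈ T <;> simp [h]

theorem setLIntegral_smul_set {E : Type*} [NormedAddCommGroup E] [NormedSpace ℝ E]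
    [MeasurableSpace E] [BorelSpace E] [FiniteDimensional ℝ E] (μ : Measure E)
    [μ.IsAddHaarMeasure] (F : E → ℝ≥0∞) (S : Set E) {c : ℝ} (hc : c ≠ 0) :
    ∫⁻ x in c • S, F x ∂μ =
      ENNReal.ofReal (|c| ^ Module.finrank ℝ E) * ∫⁻ x in S, F (c • x) ∂μ := by
  have h := ((measurable_const_smul c⁻¹).measurePreserving μ).setLIntegral_comp_preimage_emb
    (MeasurableEquiv.smul₀ c⁻¹ (inv_ne_zero hc)).measurableEmbedding (fun x => F (c • x)) S
  rw [preimage_smul_inv₀ hc, Measure.map_addHaar_smul μ (inv_ne_zero hc), Measure.restrict_smul,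
    lintegral_smul_measure] at h
  simpa [smul_smul, hc, abs_inv] using h

section Lift

variable {E : Type*} {q : ℕ} {g : E → ℝ}

/-- `‖·‖` is the sup norm on `Fin q → ℝ`, so the fibres are cubes. -/
def liftBody (q : ℕ) (g : E → ℝ) : Set (E × (Fin q → ℝ)) :=
  {p | p.1 ∈ {x | 0 < g x} ∧ ‖p.2‖ ≤ 1 + log (g p.1) / q}

theorem convex_liftBody [AddCommGroup E] [Module ℝ E] (hg : IsEvenLogConcave g) :
    Convex ℝ (liftBody q g) := by
  refine ConcaveOn.convex_setOf_norm_le (G := Fin q → ℝ) (r := fun x => 1 + log (g x) / q)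
    (((hg.concaveOn_log.smul (inv_nonneg.2 q.cast_nonneg)).add_const 1).congr fun x _ => ?_)
  simp [div_eq_inv_mul, add_comm]

theorem neg_mem_liftBody [AddCommGroup E] [Module ℝ E] (hg : IsEvenLogConcave g)
    {p : E × (Fin q → ℝ)} (hp : p ∈ liftBody q g) : -p ∈ liftBody q g := by
  simpa [liftBody, hg.2.1] using hp

theorem preimage_mk_liftBody_of_pos {x : E} (hx : 0 < g x) :
    Prod.mk x ⁻¹' liftBody q g = Metric.closedBall 0 (1 + log (g x) / q) := by
  ext y
  simp [liftBody, hx]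

theorem preimage_mk_liftBody_of_nonpos {x : E} (hx : ¬0 < g x) :
    Prod.mk x ⁻¹' liftBody q g = ∅ := by
  ext y
  simp [liftBody, hx]

theorem measurableSet_preimage_mk_liftBody (x : E) :
    MeasurableSet (Prod.mk x ⁻¹' liftBody q g) := by
  by_cases hx : 0 < g x
  · rw [preimage_mk_liftBody_of_pos hx]
    exact measurableSet_closedBall
  · rw [preimage_mk_liftBody_of_nonpos hx]
    exact MeasurableSet.empty

theorem volume_preimage_mk_liftBody (hq : q ≠ 0) (x : E) :
    volume (Prod.mk x ⁻¹' liftBody q g) = ENNReal.ofReal (2 ^ q * powApprox q (g x)) := by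
  by_cases hx : 0 < g x
  · rw [preimage_mk_liftBody_of_pos hx, powApprox, if_pos hx]
    rcases le_or_gt 0 (1 + log (g x) / q) with h | h
    · rw [Real.volume_pi_closedBall _ h, max_eq_left h, Fintype.card_fin, mul_pow]
    · rw [Metric.closedBall_eq_empty.2 h, max_eq_right h.le, zero_pow hq, mul_zero,
        measure_empty, ENNReal.ofReal_zero]
  · rw [preimage_mk_liftBody_of_nonpos hx, powApprox, if_neg hx, mul_zero, measure_empty,
      ENNReal.ofReal_zero]

end Lift

section Split

variable {n q : ℕ}

/-- `z ↦ (z ∘ Fin.castAdd q, z ∘ Fin.natAdd n)`. -/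
def finAddProdEquiv (n q : ℕ) : (Fin (n + q) → ℝ) ≃ᵐ (Fin n → ℝ) × (Fin q → ℝ) :=
  (MeasurableEquiv.piCongrLeft (fun _ => ℝ) finSumFinEquiv).symm.trans
    (MeasurableEquiv.sumPiEquivProdPi fun _ => ℝ)

theorem measurePreserving_finAddProdEquiv (n q : ℕ) :
    MeasurePreserving (finAddProdEquiv n q) :=
  (volume_measurePreserving_piCongrLeft (fun _ => ℝ) finSumFinEquiv).symm.trans
    (volume_measurePreserving_sumPiEquivProdPi _)

theorem isLinearMap_finAddProdEquiv (n q : ℕ) : IsLinearMap ℝ (finAddProdEquiv n q) :=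
  ⟨fun _ _ => rfl, fun _ _ => rfl⟩

theorem IsEvenLogConcave.comp_finAddProdEquiv_fst {f : (Fin n → ℝ) → ℝ}
    (hf : IsEvenLogConcave f) : IsEvenLogConcave fun z => f (finAddProdEquiv n q z).1 :=
  hf.comp_linearMap ((LinearMap.fst ℝ _ _).comp (isLinearMap_finAddProdEquiv n q).mk')

theorem nullMeasurableSet_liftBody {g : (Fin n → ℝ) → ℝ} (hg : IsEvenLogConcave g) :
    NullMeasurableSet (liftBody q g) volume := by
  have hK := ((convex_liftBody hg).is_linear_preimage
    (isLinearMap_finAddProdEquiv n q)).nullMeasurableSet volume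
  simpa only [MeasurableEquiv.symm_preimage_preimage] using
    hK.preimage ((measurePreserving_finAddProdEquiv n q).symm _).quasiMeasurePreserving

theorem withDensity_smul_preimage_liftBody (hq : q ≠ 0) {f g : (Fin n → ℝ) → ℝ}
    (hf : IsEvenLogConcave f) (hg : IsEvenLogConcave g) {c : ℝ} (hc : c ≠ 0) :
    (volume.withDensity fun z => ENNReal.ofReal (f (finAddProdEquiv n q z).1))
        (c • (finAddProdEquiv n q ⁻¹' liftBody q g)) =
      ENNReal.ofReal (|c| ^ (n + q) * 2 ^ q) *
        ∫⁻ x, ENNReal.ofReal (f (c • x) * powApprox q (g x)) := by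
  set e := finAddProdEquiv n q
  have hfc : AEMeasurable (fun x => ENNReal.ofReal (f (c • x))) volume :=
    ENNReal.measurable_ofReal.comp_aemeasurable (hf.comp_smul c).aemeasurable
  calc _ = ∫⁻ z in c • (e ⁻¹' liftBody q g), ENNReal.ofReal (f (e z).1) := withDensity_apply' _ _
    _ = ENNReal.ofReal (|c| ^ (n + q)) *
          ∫⁻ p in liftBody q g, ENNReal.ofReal (f (c • p.1)) ∂volume.prod volume := by
        rw [setLIntegral_smul_set volume _ _ hc, Module.finrank_fin_fun, ← Measure.volume_eq_prod,
          ← (measurePreserving_finAddProdEquiv n q).setLIntegral_comp_preimage_emb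
            e.measurableEmbedding]
        rfl
    _ = ENNReal.ofReal (|c| ^ (n + q)) *
          ∫⁻ x, ENNReal.ofReal (f (c • x)) * ENNReal.ofReal (2 ^ q * powApprox q (g x)) := by
        rw [setLIntegral_prod_fst
          (by rw [← Measure.volume_eq_prod]; exact nullMeasurableSet_liftBody hg)
          (fun x => (measurableSet_preimage_mk_liftBody x).nullMeasurableSet) hfc]
        simp_rw [volume_preimage_mk_liftBody hq]
    _ = _ := by
        rw [ENNReal.ofReal_mul (by positivity), mul_assoc]
        congr 1
        rw [← lintegral_const_mul' _ _ ENNReal.ofReal_ne_top]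
        refine lintegral_congr fun x => ?_
        rw [← ENNReal.ofReal_mul (hf.1 _), ← ENNReal.ofReal_mul (by positivity)]
        ring_nf

end Split

theorem isLogConcave_integral_mul_powApprox {n q : ℕ} (hq : q ≠ 0) {f g : (Fin n → ℝ) → ℝ}
    (hf : IsEvenLogConcave f) (hg : IsEvenLogConcave g)
    (hB : BProperty (volume.withDensity fun z => ENNReal.ofReal (f (finAddProdEquiv n q z).1))) :
    IsLogConcave fun u => ∫ x, f (exp (-u) • x) * powApprox q (g x) := by
  have hK : IsLogConcave fun u => ((volume.withDensity fun z => ENNReal.ofReal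
      (f (finAddProdEquiv n q z).1)) (exp u • (finAddProdEquiv n q ⁻¹' liftBody q g))).toReal :=
    hB _ ((convex_liftBody hg).is_linear_preimage (isLinearMap_finAddProdEquiv n q))
      fun z hz => neg_mem_liftBody hg hz
  refine IsLogConcave.of_exp_affine_mul (-(n + q : ℝ)) (q * log 2)
    (fun u => integral_nonneg fun x => mul_nonneg (hf.1 _) (powApprox_nonneg _ _)) ?_
  convert hK.comp_neg using 2 with u
  rw [withDensity_smul_preimage_liftBody hq hf hg (exp_ne_zero _), ENNReal.toReal_mul,
    ENNReal.toReal_ofReal (by positivity), ← integral_eq_lintegral_of_nonneg_ae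
      (Eventually.of_forall fun x => mul_nonneg (hf.1 _) (powApprox_nonneg _ _))
      ((hf.comp_smul _).aemeasurable.mul
        ((measurable_powApprox q).comp_aemeasurable hg.aemeasurable)).aestronglyMeasurable,
    abs_of_pos (exp_pos _), ← exp_nat_mul, exp_add, exp_nat_mul (log 2), exp_log two_pos]
  push_cast
  ring_nf

theorem isLogConcave_integral_of_bProperty
    (hB : ∀ N : ℕ, 0 < N → ∀ F : (Fin N → ℝ) → ℝ, IsEvenLogConcave F →
      BProperty (volume.withDensity fun x => ENNReal.ofReal (F x)))
    {n : ℕ} {f g : (Fin n → ℝ) → ℝ} (hf : IsEvenLogConcave f) (hg : IsEvenLogConcave g) :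
    IsLogConcave fun u => ∫ x, f (exp (-u) • x) * g x :=
  isLogConcave_integral_mul_of_powApprox (fun u x => hf.1 _)
    (fun u => (hf.comp_smul _).aemeasurable.aestronglyMeasurable) hf.monotone_exp_neg_smul hg.1
    hg.aemeasurable fun q hq => isLogConcave_integral_mul_powApprox hq hf hg
      (hB (n + q) (by omega) _ hf.comp_finAddProdEquiv_fst)

theorem integral_indicator_inv_smul_mul {E : Type*} [AddCommGroup E] [Module ℝ E]
    [MeasurableSpace E] {μ : Measure E} [SFinite μ] {A : Set E} {c : ℝ} (hc : c ≠ 0)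
    (hA : NullMeasurableSet (c • A) μ) {h : E → ℝ} (h0 : ∀ x, 0 ≤ h x) (hm : AEMeasurable h μ) :
    ∫ x, A.indicator 1 (c⁻¹ • x) * h x ∂μ =
      ((μ.withDensity fun x => ENNReal.ofReal (h x)) (c • A)).toReal := by
  have hind : (fun x => A.indicator 1 (c⁻¹ • x) * h x) = (c • A).indicator h := by
    ext x
    by_cases hx : x ∈ c • A
    · rw [indicator_of_mem hx, indicator_of_mem ((mem_smul_set_iff_inv_smul_mem₀ hc _ _).1 hx),
        Pi.one_apply, one_mul]
    · rw [indicator_of_notMem hx, indicator_of_notMem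
        (fun h' => hx ((mem_smul_set_iff_inv_smul_mem₀ hc _ _).2 h')), zero_mul]
  rw [hind, integral_indicator₀ hA, withDensity_apply',
    integral_eq_lintegral_of_nonneg_ae (Eventually.of_forall h0) hm.aestronglyMeasurable.restrict]

theorem BConjecture_iff_functional_version :
    (∀ n : ℕ, 0 < n → ∀ f : (Fin n → ℝ) → ℝ, IsEvenLogConcave f →
      BProperty (volume.withDensity (fun x => ENNReal.ofReal (f x)))) ↔
    (∀ n : ℕ, 0 < n → ∀ f g : (Fin n → ℝ) → ℝ,
      IsEvenLogConcave f → IsEvenLogConcave g →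
      ∀ s t : ℝ, ∀ l ∈ Set.Icc (0 : ℝ) 1,
        (∫ x, f (Real.exp (-s) • x) * g x) ^ (1 - l) *
            (∫ x, f (Real.exp (-t) • x) * g x) ^ l ≤
          ∫ x, f (Real.exp (-((1 - l) * s + l * t)) • x) * g x) := by
  constructor
  · intro hB n _ f g hf hg
    exact isLogConcave_integral_of_bProperty hB hf hg
  · intro hF n hn f hf A hA hsym s t l hl
    have hrepr : ∀ u, ∫ x, A.indicator 1 (exp (-u) • x) * f x =
        ((volume.withDensity fun x => ENNReal.ofReal (f x)) (exp u • A)).toReal := fun u => by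
      rw [exp_neg]
      exact integral_indicator_inv_smul_mul (exp_ne_zero u) ((hA.smul _).nullMeasurableSet _)
        hf.1 hf.aemeasurable
    simpa only [hrepr] using hF n hn _ f (isEvenLogConcave_indicator hA hsym) hf s t l hl
end
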